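/- Let n ≥ 2 and let a_1, …, a_n be positive real numbers. An n×n matrix M is a rank-one matrix in the standard simplex Δ^{nn−1} with m_{ii} = a_i for all i if and only if there exists a vector u ∈ ℝ^n with u_i > 0 for all i, ∑_{i=1}^n u_i = 1 and ∑_{i=1}^n a_i/u_i = 1 such that m_{ij} = u_i · (a_j/u_j) for all i, j. -/

import Mathlib

/-!
In a nonnegative matrix with positive diagonal the row sums `uᵢ ≥ mᵢᵢ` are positive, and
when the rank is one the vanishing of the 2×2 minors forces `mᵢⱼ = uᵢ · mⱼⱼ / uⱼ`.
Conversely `(uᵢ · aⱼ / uⱼ)` is the outer product of two nonzero vectors, so it has rank one,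
and its entry sum is `(∑ uᵢ) · (∑ aⱼ / uⱼ)`.
-/

open Finset

namespace Matrix

variable {m n K : Type*} [Fintype m] [Fintype n] [Field K]

theorem rank_eq_zero_iff (A : Matrix m n K) : A.rank = 0 ↔ A = 0 := by
  refine ⟨fun h => ?_, fun h => h ▸ rank_zero⟩
  rw [rank_eq_finrank_span_row, Submodule.finrank_eq_zero, Submodule.span_eq_bot] at h
  exact funext fun i => h _ (Set.mem_range_self i)

theorem rank_vecMulVec_eq_one {w : m → K} {v : n → K} (hw : w ≠ 0) (hv : v ≠ 0) :
    (vecMulVec w v).rank = 1 := by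
  refine le_antisymm (rank_vecMulVec_le w v) (Nat.one_le_iff_ne_zero.mpr fun h => ?_)
  obtain ⟨i, hi⟩ := Function.ne_iff.mp hw
  obtain ⟨j, hj⟩ := Function.ne_iff.mp hv
  exact mul_ne_zero hi hj congr($((rank_eq_zero_iff _).mp h) i j)

theorem mul_eq_mul_of_rank_le_one {A : Matrix m n K} (hA : A.rank ≤ 1) (i k : m) (j l : n) :
    A i j * A k l = A i l * A k j := by
  rw [rank_eq_finrank_span_row, Submodule.finrank_le_one_iff_isPrincipal] at hA
  obtain ⟨v, hv⟩ := hA.principal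
  have hrow : ∀ i, ∃ c : K, c • v = A i := fun i =>
    Submodule.mem_span_singleton.mp (hv ▸ Submodule.subset_span (Set.mem_range_self i))
  obtain ⟨c, hc⟩ := hrow i
  obtain ⟨d, hd⟩ := hrow k
  simp only [← hc, ← hd, Pi.smul_apply, smul_eq_mul]
  ring

-- Summing the minor identity `Aᵢⱼ Aⱼₗ = Aᵢₗ Aⱼⱼ` over `l` gives `Aᵢⱼ rⱼ = rᵢ Aⱼⱼ` for the row sums `r`.
theorem eq_vecMulVec_rowSum_of_rank_le_one {A : Matrix n n K} (hA : A.rank ≤ 1)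
    (hr : ∀ i, ∑ j, A i j ≠ 0) :
    A = vecMulVec (fun i => ∑ j, A i j) (fun j => A j j / ∑ l, A j l) := by
  ext i j
  rw [vecMulVec_apply, ← mul_div_assoc, eq_div_iff (hr j), mul_sum, sum_mul]
  exact sum_congr rfl fun l _ => mul_eq_mul_of_rank_le_one hA i j j l

end Matrix

theorem completion_characterization_general (n : ℕ) (a : Fin n → ℝ)
    (ha : ∀ i, 0 < a i) (M : Matrix (Fin n) (Fin n) ℝ) :
    ((∀ i j, 0 ≤ M i j) ∧ (∑ i, ∑ j, M i j = 1) ∧ M.rank = 1 ∧ (∀ i, M i i = a i)) ↔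
    (∃ u : Fin n → ℝ, (∀ i, 0 < u i) ∧ (∑ i, u i = 1) ∧ (∑ i, a i / u i = 1) ∧
      ∀ i j, M i j = u i * (a j / u j)) := by
  have sum_eq_mul_sum {u w : Fin n → ℝ} (h : ∀ i j, M i j = u i * w j) :
      ∑ i, ∑ j, M i j = (∑ i, u i) * ∑ j, w j := by
    simp_rw [h, ← mul_sum, ← sum_mul]
  constructor
  · rintro ⟨hnonneg, hsum, hrank, hdiag⟩
    set u : Fin n → ℝ := fun i => ∑ j, M i j
    have hu : ∀ i, 0 < u i := fun i =>
      (ha i).trans_le (hdiag i ▸ single_le_sum (fun j _ => hnonneg i j) (mem_univ i))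
    have hM : ∀ i j, M i j = u i * (a j / u j) := by
      simpa only [← hdiag, ← Matrix.ext_iff, Matrix.vecMulVec_apply] using
        Matrix.eq_vecMulVec_rowSum_of_rank_le_one hrank.le fun i => (hu i).ne'
    have hu_sum : ∑ i, u i = 1 := hsum
    refine ⟨u, hu, hu_sum, ?_, hM⟩
    simpa [hsum, hu_sum, eq_comm] using sum_eq_mul_sum hM
  · rintro ⟨u, hu, hu_sum, hw_sum, hM⟩
    have hne_zero {v : Fin n → ℝ} (h : ∑ i, v i = 1) : v ≠ 0 := by
      rintro rfl
      simp at h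
    refine ⟨fun i j => hM i j ▸ mul_nonneg (hu i).le (div_pos (ha j) (hu j)).le,
      by rw [sum_eq_mul_sum hM, hu_sum, hw_sum, one_mul], ?_,
      fun i => by rw [hM, mul_div_cancel₀ _ (hu i).ne']⟩
    rw [show M = Matrix.vecMulVec u (fun j => a j / u j) from Matrix.ext hM]
    exact Matrix.rank_vecMulVec_eq_one (hne_zero hu_sum) (hne_zero hw_sum)

/-- Characterization of rank-one matrices in the standard simplex with prescribed
positive diagonal `a`: they are exactly the matrices `(uᵢ · aⱼ/uⱼ)` for a positive
vector `u` summing to 1 with `∑ aᵢ/uᵢ = 1`. -/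
theorem completion_characterization (n : ℕ) (hn : 2 ≤ n) (a : Fin n → ℝ)
    (ha : ∀ i, 0 < a i) (M : Matrix (Fin n) (Fin n) ℝ) :
    ((∀ i j, 0 ≤ M i j) ∧ (∑ i, ∑ j, M i j = 1) ∧ M.rank = 1 ∧ (∀ i, M i i = a i)) ↔
    (∃ u : Fin n → ℝ, (∀ i, 0 < u i) ∧ (∑ i, u i = 1) ∧ (∑ i, a i / u i = 1) ∧
      ∀ i j, M i j = u i * (a j / u j)) :=
  completion_characterization_general n a ha M
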